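/- arXiv:2006.10650 — 2 statements merged into one kernel-verified Lean document; each statement's English description precedes it below -/
import Mathlib

section
/- The seven groupoids of order 2 with Cayley tables 11 11, 11 12, 11 21, 11 22, 12 21, 21 11, 21 21 are pairwise non-isomorphic and pairwise non-anti-isomorphic. -/
def tbl (a b c d : Fin 2) : Fin 2 → Fin 2 → Fin 2 := fun x y =>
  if x = 0 then (if y = 0 then a else b) else (if y = 0 then c else d)

def Iso {G : Type*} (f g : G → G → G) : Prop :=
  ∃ α : Equiv.Perm G, ∀ x y, g x y = α.symm (f (α x) (α y))

def AntiIso {G : Type*} (f g : G → G → G) : Prop :=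
  ∃ α : Equiv.Perm G, ∀ x y, g x y = α.symm (f (α y) (α x))

/-- The seven representative groupoids 11 11, 11 12, 11 21, 11 22, 12 21, 21 11, 21 21. -/
def T : Fin 7 → (Fin 2 → Fin 2 → Fin 2)
  | 0 => tbl 0 0 0 0
  | 1 => tbl 0 0 0 1
  | 2 => tbl 0 0 1 0
  | 3 => tbl 0 0 1 1
  | 4 => tbl 0 1 1 0
  | 5 => tbl 1 0 0 0
  | 6 => tbl 1 0 1 0

instance {f g : Fin 2 → Fin 2 → Fin 2} : Decidable (Iso f g) := by
  unfold Iso; infer_instance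

instance {f g : Fin 2 → Fin 2 → Fin 2} : Decidable (AntiIso f g) := by
  unfold AntiIso; infer_instance

theorem seven_pairwise_non_iso_non_antiiso :
    ∀ i j : Fin 7, i ≠ j → ¬ Iso (T i) (T j) ∧ ¬ AntiIso (T i) (T j) := by decide
end

section
/- Every groupoid of order 2 is isomorphic or anti-isomorphic to exactly one of the seven groupoids with Cayley tables 11 11, 11 12, 11 21, 11 22, 12 21, 21 11, 21 21. -/
theorem every_order2_groupoid_iso_or_antiiso_unique_rep :
    ∀ op : Fin 2 → Fin 2 → Fin 2, ∃! i : Fin 7, Iso (T i) op ∨ AntiIso (T i) op := by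
  unfold Iso AntiIso ExistsUnique
  decide
end
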